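/- arXiv:2312.16398 — 5 statements merged into one kernel-verified Lean document; each statement's English description precedes it below -/
import Mathlib

section
/- If a topological space X is the union of finitely many closed subspaces, each of which is (homeomorphic to) a linearly ordered topological space, then the set LO(X) of points at which X is locally ordered (i.e., points having an open neighborhood that is a linearly ordered topological space in the subspace topology) is an open and dense subset of X. -/
open Set Topology

universe u

/-- A topological space is a LOTS if it is homeomorphic to a linear order with the order topology. -/
def IsLOTS (Y : Type u) [TopologicalSpace Y] : Prop :=
  ∃ (L : Type u) (lo : LinearOrder L) (ts : TopologicalSpace L),
    @OrderTopology L ts lo.toPartialOrder.toPreorder ∧ Nonempty (Y ≃ₜ L)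

/-- The set of locally ordered points of `X`. -/
def LO (X : Type u) [TopologicalSpace X] : Set X :=
  {x | ∃ U : Set X, IsOpen U ∧ x ∈ U ∧ IsLOTS ↥U}

/-- Orderly open sets. -/
def Orderly {X : Type u} [TopologicalSpace X] (U : Set X) : Prop :=
  IsOpen U ∧ U = interior (closure U) ∧ IsConnected U ∧
    (closure U \ U).Finite ∧ closure U \ U ⊆ LO X

/-- Topology of pointwise convergence on the homeomorphism group. -/
instance homPt (X : Type u) [TopologicalSpace X] : TopologicalSpace (X ≃ₜ X) :=
  TopologicalSpace.induced (fun f => (f : X → X)) Pi.topologicalSpace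

/-!
A closed set has nowhere dense frontier, and a finite union of closed nowhere dense sets is
nowhere dense; so the points lying in the interior of some piece of a finite closed cover form a
dense set. The interior of a LOTS piece `S` consists of locally ordered points: an open subset of
a LOTS contains, around each of its points, an open order-convex set, and a convex subset of a
linear order carries the order topology as a subspace.
-/

section FiniteClosedCover

variable {X : Type*} [TopologicalSpace X]

theorem interior_biUnion_eq_empty_of_isClosed {ι : Type*} {s : Finset ι} {f : ι → Set X}
    (hc : ∀ i ∈ s, IsClosed (f i)) (h : ∀ i ∈ s, interior (f i) = ∅) :
    interior (⋃ i ∈ s, f i) = ∅ := by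
  classical
  induction s using Finset.induction_on with
  | empty => simp
  | insert a s _ ih =>
    rw [Finset.set_biUnion_insert, interior_union_isClosed_of_interior_empty
      (hc a (Finset.mem_insert_self a s))
      (ih (fun i hi => hc i (Finset.mem_insert_of_mem hi))
        (fun i hi => h i (Finset.mem_insert_of_mem hi)))]
    exact h a (Finset.mem_insert_self a s)

theorem dense_iUnion_interior_of_closed_of_finite {ι : Type*} [Finite ι] {f : ι → Set X}
    (hc : ∀ i, IsClosed (f i)) (hU : ⋃ i, f i = univ) : Dense (⋃ i, interior (f i)) := by
  cases nonempty_fintype ι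
  have hfrontier : interior (⋃ i ∈ Finset.univ, frontier (f i)) = ∅ :=
    interior_biUnion_eq_empty_of_isClosed (fun i _ => isClosed_frontier)
      (fun i _ => interior_frontier (hc i))
  refine (interior_eq_empty_iff_dense_compl.1 hfrontier).mono fun x hx => ?_
  obtain ⟨i, hxi⟩ := mem_iUnion.1 (hU.symm ▸ mem_univ x : x ∈ ⋃ i, f i)
  have hxi' : x ∉ frontier (f i) := fun h =>
    hx (mem_biUnion (Finset.mem_coe.2 (Finset.mem_univ i)) h)
  rw [(hc i).frontier_eq] at hxi'
  exact mem_iUnion.2 ⟨i, not_not.1 fun h => hxi' ⟨hxi, h⟩⟩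

end FiniteClosedCover

theorem IsOpen.ordConnectedComponent {M : Type*} [LinearOrder M] [TopologicalSpace M]
    [OrderTopology M] {U : Set M} (hU : IsOpen U) (a : M) :
    IsOpen (ordConnectedComponent U a) :=
  isOpen_iff_mem_nhds.2 fun b hb => by
    rw [ordConnectedComponent_eq (mem_ordConnectedComponent.1 hb)]
    exact ordConnectedComponent_mem_nhds.2 (hU.mem_nhds (ordConnectedComponent_subset hb))

theorem IsLOTS.of_homeomorph {Y Z : Type u} [TopologicalSpace Y] [TopologicalSpace Z]
    (h : IsLOTS Y) (e : Z ≃ₜ Y) : IsLOTS Z := by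
  obtain ⟨M, lo, ts, hot, ⟨f⟩⟩ := h
  exact ⟨M, lo, ts, hot, ⟨e.trans f⟩⟩

theorem isLOTS_of_ordConnected {M : Type u} [LinearOrder M] [TopologicalSpace M]
    [OrderTopology M] (C : Set M) [OrdConnected C] : IsLOTS C :=
  ⟨C, inferInstance, inferInstance, orderTopology_of_ordConnected, ⟨Homeomorph.refl _⟩⟩

theorem isOpen_LO (X : Type u) [TopologicalSpace X] : IsOpen (LO X) :=
  isOpen_iff_forall_mem_open.2 fun _ ⟨U, hU, hxU, hUL⟩ =>
    ⟨U, fun _ hy => ⟨U, hU, hy, hUL⟩, hU, hxU⟩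

theorem interior_subset_LO {X : Type u} [TopologicalSpace X] {S : Set X} (hS : IsLOTS S) :
    interior S ⊆ LO X := by
  intro x hx
  obtain ⟨M, _, _, _, ⟨e⟩⟩ := hS
  let x' : S := ⟨x, interior_subset hx⟩
  let U : Set M := e '' (Subtype.val ⁻¹' interior S)
  have hU : IsOpen U := e.isOpenMap _ (isOpen_interior.preimage continuous_subtype_val)
  let C := ordConnectedComponent U (e x')
  have hA : IsOpen (e ⁻¹' C) := (hU.ordConnectedComponent _).preimage e.continuous
  let W : Set X := Subtype.val '' (e ⁻¹' C)
  have hWS : W ⊆ interior S := by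
    rintro _ ⟨a, ha, rfl⟩
    obtain ⟨b, hb, hba⟩ := ordConnectedComponent_subset ha
    exact e.injective hba ▸ hb
  have hW : IsOpen W := by
    obtain ⟨c, hc, hcW⟩ := hA.image_val
    have : W = c ∩ interior S :=
      Subset.antisymm (fun y hy => ⟨(hcW.subset hy).1, hWS hy⟩) fun y hy =>
        hcW.symm.subset ⟨hy.1, interior_subset hy.2⟩
    exact this ▸ hc.inter isOpen_interior
  have hxW : x ∈ W := ⟨x', self_mem_ordConnectedComponent.2 ⟨x', hx, rfl⟩, rfl⟩
  exact ⟨W, hW, hxW, (isLOTS_of_ordConnected C).of_homeomorph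
    ((IsEmbedding.subtypeVal.homeomorphImage _).symm.trans (e.subtype fun _ => Iff.rfl))⟩

/-- If X is a finite union of closed subspaces each of which is a LOTS,
then LO(X) is open and dense in X. -/
theorem stmt_0 {X : Type u} [TopologicalSpace X] (n : ℕ) (L : Fin n → Set X)
    (hclosed : ∀ i, IsClosed (L i)) (hlots : ∀ i, IsLOTS ↥(L i))
    (hcover : ⋃ i, L i = Set.univ) :
    IsOpen (LO X) ∧ Dense (LO X) :=
  ⟨isOpen_LO X, (dense_iUnion_interior_of_closed_of_finite hclosed hcover).mono
    (iUnion_subset fun i => interior_subset_LO (hlots i))⟩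
end

section
/- Let X be a topological space and let U and V be connected open subsets of X whose boundaries coincide (i.e., closure(U) \ U = closure(V) \ V). Then either U = V or U and V are disjoint. -/
open Set Topology

universe u

lemma aux_sub {X : Type u} [TopologicalSpace X] {U V : Set X}
    (hUopen : IsOpen U) (hVconn : IsConnected V)
    (hbd : closure U \ U = closure V \ V) (hne : (V ∩ U).Nonempty) : V ⊆ U := by
  have hcover : V ⊆ U ∪ (closure U)ᶜ := by
    intro x hx
    by_cases h : x ∈ closure U
    · by_cases h2 : x ∈ U
      · exact Or.inl h2
      · have : x ∈ closure V \ V := hbd ▸ ⟨h, h2⟩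
        exact absurd hx this.2
    · exact Or.inr h
  rcases (V ∩ (closure U)ᶜ).eq_empty_or_nonempty with hE | hNE
  · intro x hx
    rcases hcover hx with h | h
    · exact h
    · exact absurd (hE ▸ (⟨hx, h⟩ : x ∈ V ∩ (closure U)ᶜ)) (notMem_empty x)
  · exfalso
    obtain ⟨x, hx⟩ := hVconn.isPreconnected U (closure U)ᶜ hUopen isClosed_closure.isOpen_compl
      hcover hne hNE
    exact hx.2.2 (subset_closure hx.2.1)

/-- Connected open sets with the same boundary coincide or are disjoint. -/
theorem stmt_1 {X : Type u} [TopologicalSpace X] (U V : Set X)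
    (hUopen : IsOpen U) (hVopen : IsOpen V)
    (hUconn : IsConnected U) (hVconn : IsConnected V)
    (hbd : closure U \ U = closure V \ V) :
    U = V ∨ U ∩ V = ∅ := by
  rcases (U ∩ V).eq_empty_or_nonempty with h | h
  · exact Or.inr h
  · left
    have h1 : V ⊆ U := aux_sub hUopen hVconn hbd (inter_comm U V ▸ h)
    have h2 : U ⊆ V := aux_sub hVopen hUconn hbd.symm h
    exact Subset.antisymm h2 h1
end

section
/- Let X be a topological space that is the union of finitely many compact connected linearly ordered subspaces. Let U be an orderly open neighborhood of a point p in X, and let D be a dense subset of X. Then there exists an orderly open neighborhood V of p with closure(V) contained in U and closure(V) \ V contained in D. -/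
open Set Topology

universe u

/-! Every point `x` of the finite boundary of `U` has an ordered chart. On each side of `x` in
that chart along which `U` accumulates at `x`, choose a cut point `d ∈ D` close to `x`: the part
of `U` strictly between `d` and `x` is then relatively clopen in `U` minus the cut points and
misses `p`. Hence the component `C` of `p` in `U` minus the finitely many cut points stays away
from the boundary of `U`. As `X` is compact Hausdorff and locally connected, `C` is open, its
frontier consists of cut points, and `V = int (cl C)` is orderly. -/

section LinearOrder

variable {α : Type*} [LinearOrder α] [TopologicalSpace α] [OrderTopology α]

theorem Set.OrdConnected.isPreconnected_of_preconnectedSpace [PreconnectedSpace α] {s : Set α}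
    (hs : s.OrdConnected) : IsPreconnected s := by
  refine isPreconnected_of_forall_pair fun x hx y hy =>
    ⟨uIcc x y, hs.uIcc_subset hx hy, left_mem_uIcc, right_mem_uIcc, ?_⟩
  have h : uIcc x y = range (Subtype.val ∘ projIcc (x ⊓ y) (x ⊔ y) inf_le_sup) := by
    rw [range_comp, range_projIcc, image_univ, Subtype.range_coe, uIcc]
  rw [h]
  exact isPreconnected_range (continuous_subtype_val.comp continuous_projIcc)

theorem OrderTopology.locallyConnectedSpace [PreconnectedSpace α] : LocallyConnectedSpace α :=
  locallyConnectedSpace_iff_connected_subsets.2 fun x _ hN =>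
    ⟨ordConnectedComponent _ x, ordConnectedComponent_mem_nhds.2 hN,
      Set.OrdConnected.isPreconnected_of_preconnectedSpace inferInstance,
      ordConnectedComponent_subset⟩

end LinearOrder

namespace IsLOTS

variable {Y : Type u} [TopologicalSpace Y]

theorem t2Space (h : IsLOTS Y) : T2Space Y := by
  obtain ⟨M, _, _, _, ⟨e⟩⟩ := h
  exact e.isEmbedding.t2Space

theorem locallyConnectedSpace [PreconnectedSpace Y] (h : IsLOTS Y) : LocallyConnectedSpace Y := by
  obtain ⟨M, _, _, _, ⟨e⟩⟩ := h
  have : PreconnectedSpace M := e.surjective.denseRange.preconnectedSpace e.continuous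
  have := OrderTopology.locallyConnectedSpace (α := M)
  exact e.isOpenEmbedding.locallyConnectedSpace

end IsLOTS

section ClosedCover

variable {X : Type*} [TopologicalSpace X] {ι : Type*} [Finite ι] {L : ι → Set X}

theorem T2Space.of_isClosed_cover (hL : ∀ i, IsClosed (L i)) (ht2 : ∀ i, T2Space (L i))
    (hcover : ⋃ i, L i = univ) : T2Space X := by
  have hdiag : diagonal X = ⋃ i, Prod.map Subtype.val Subtype.val '' diagonal (L i) := by
    ext ⟨a, b⟩
    simpa using fun _ => iUnion_eq_univ_iff.1 hcover a
  rw [t2_iff_isClosed_diagonal, hdiag]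
  exact isClosed_iUnion_of_finite fun i =>
    ((hL i).isClosedEmbedding_subtypeVal.prodMap (hL i).isClosedEmbedding_subtypeVal).isClosedMap _
      isClosed_diagonal

theorem LocallyConnectedSpace.of_isClosed_cover (hL : ∀ i, IsClosed (L i))
    (hlc : ∀ i, LocallyConnectedSpace (L i)) (hcover : ⋃ i, L i = univ) :
    LocallyConnectedSpace X := by
  refine locallyConnectedSpace_iff_connectedComponentIn_open.2 fun O hO _ _ =>
    isOpen_iff_mem_nhds.2 fun w hw => ?_
  rw [connectedComponentIn_eq hw]
  have hwO : w ∈ O := connectedComponentIn_subset _ _ hw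
  have hpiece : ∀ i, ∀ᶠ z in 𝓝 w, z ∈ L i → z ∈ connectedComponentIn O w := by
    intro i
    by_cases hwi : w ∈ L i
    · rw [← eventually_nhdsWithin_iff, ← map_nhds_subtype_val ⟨w, hwi⟩, Filter.eventually_map]
      have hopen : IsOpen (connectedComponentIn (Subtype.val ⁻¹' O) (⟨w, hwi⟩ : L i)) :=
        (hO.preimage continuous_subtype_val).connectedComponentIn
      filter_upwards [hopen.mem_nhds (mem_connectedComponentIn hwO)] with z hz
      exact connectedComponentIn_mono _ (image_preimage_subset _ _)
        (continuous_subtype_val.continuousOn.image_connectedComponentIn_subset hwO ⟨z, hz, rfl⟩)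
    · filter_upwards [(hL i).isOpen_compl.mem_nhds hwi] with z hz hzi using absurd hzi hz
  filter_upwards [Filter.eventually_all.2 hpiece] with z hz
  obtain ⟨i, hi⟩ := iUnion_eq_univ_iff.1 hcover z
  exact hz i hi

end ClosedCover

section Cut

variable {α : Type*} [LinearOrder α] [TopologicalSpace α] [OrderTopology α]
  {U D G : Set α} {x : α}

theorem exists_cut_nhdsLE (hU : IsOpen U) (hxU : x ∉ U) (hD : Dense D) (hG : G ∈ 𝓝 x) :
    ∃ A E : Set α, IsOpen A ∧ A ⊆ G ∧ E.Finite ∧ E ⊆ G ∩ D ∧ closure A ∩ U ⊆ A ∪ E ∧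
      ∀ᶠ z in 𝓝[≤] x, z ∈ U → z ∈ A := by
  by_cases hfar : ∀ᶠ z in 𝓝[≤] x, z ∉ U
  · exact ⟨∅, ∅, isOpen_empty, empty_subset _, finite_empty, empty_subset _, by simp,
      hfar.mono fun z hz hzU => absurd hzU hz⟩
  obtain ⟨c, hcx, hcG⟩ : ∃ c < x, Ioc c x ⊆ G := by
    refine exists_Ioc_subset_of_mem_nhds hG ?_
    by_contra! hmin
    exact hfar (eventually_nhdsWithin_of_forall fun z hz hzU =>
      hxU (le_antisymm hz (hmin z) ▸ hzU))
  obtain ⟨d, ⟨⟨hcd, hdx⟩, -⟩, hdD⟩ : ((Ioo c x ∩ U) ∩ D).Nonempty := by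
    refine hD.inter_open_nonempty _ (isOpen_Ioo.inter hU) ?_
    by_contra! hempty
    refine hfar (Filter.mem_of_superset (Ioc_mem_nhdsLE hcx) fun z hz hzU => ?_)
    exact hempty.subset ⟨⟨hz.1, hz.2.lt_of_ne (ne_of_mem_of_not_mem hzU hxU)⟩, hzU⟩
  refine ⟨Ioo d x ∩ U, {d}, isOpen_Ioo.inter hU,
    fun z hz => hcG ⟨hcd.trans hz.1.1, hz.1.2.le⟩, finite_singleton d,
    singleton_subset_iff.2 ⟨hcG ⟨hcd, hdx.le⟩, hdD⟩, ?_, ?_⟩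
  · rintro z ⟨hz, hzU⟩
    have hz' : z ∈ Icc d x :=
      closure_minimal (inter_subset_left.trans Ioo_subset_Icc_self) isClosed_Icc hz
    rcases hz'.1.eq_or_lt with rfl | hdz
    · exact Or.inr rfl
    · exact Or.inl ⟨⟨hdz, hz'.2.lt_of_ne (ne_of_mem_of_not_mem hzU hxU)⟩, hzU⟩
  · filter_upwards [Ioc_mem_nhdsLE hdx] with z hz hzU
    exact ⟨⟨hz.1, hz.2.lt_of_ne (ne_of_mem_of_not_mem hzU hxU)⟩, hzU⟩

theorem exists_cut_nhds (hU : IsOpen U) (hxU : x ∉ U) (hD : Dense D) (hG : G ∈ 𝓝 x) :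
    ∃ A E : Set α, IsOpen A ∧ A ⊆ G ∧ E.Finite ∧ E ⊆ G ∩ D ∧ closure A ∩ U ⊆ A ∪ E ∧
      ∀ᶠ z in 𝓝 x, z ∈ U → z ∈ A := by
  obtain ⟨A₁, E₁, hA₁, hA₁G, hE₁, hE₁G, hcl₁, hev₁⟩ := exists_cut_nhdsLE hU hxU hD hG
  obtain ⟨A₂, E₂, hA₂, hA₂G, hE₂, hE₂G, hcl₂, hev₂⟩ : ∃ A E : Set α, IsOpen A ∧ A ⊆ G ∧
      E.Finite ∧ E ⊆ G ∩ D ∧ closure A ∩ U ⊆ A ∪ E ∧ ∀ᶠ z in 𝓝[≥] x, z ∈ U → z ∈ A :=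
    exists_cut_nhdsLE (α := αᵒᵈ) hU hxU hD hG
  refine ⟨A₁ ∪ A₂, E₁ ∪ E₂, hA₁.union hA₂, union_subset hA₁G hA₂G, hE₁.union hE₂,
    union_subset hE₁G hE₂G, ?_, ?_⟩
  · rw [closure_union, union_inter_distrib_right]
    exact union_subset (hcl₁.trans (union_subset_union subset_union_left subset_union_left))
      (hcl₂.trans (union_subset_union subset_union_right subset_union_right))
  · rw [← nhdsLE_sup_nhdsGE, Filter.eventually_sup]
    exact ⟨hev₁.mono fun z hz hzU => Or.inl (hz hzU), hev₂.mono fun z hz hzU => Or.inr (hz hzU)⟩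

end Cut

section Space

variable {X : Type u} [TopologicalSpace X]

theorem exists_finite_cut_of_mem_LO [T3Space X] {U D : Set X} {x p : X} (hU : IsOpen U)
    (hD : Dense D) (hx : x ∈ LO X) (hxU : x ∉ U) (hpx : p ≠ x) :
    ∃ E : Set X, E.Finite ∧ E ⊆ D ∩ LO X ∧ p ∉ E ∧
      ∀ S : Set X, IsPreconnected S → p ∈ S → S ⊆ U \ E → x ∉ closure S := by
  obtain ⟨W, hWo, hxW, M, _, _, _, ⟨e⟩⟩ := hx
  set ψ : M → X := Subtype.val ∘ e.symm
  have hψ : IsOpenEmbedding ψ := hWo.isOpenEmbedding_subtypeVal.comp e.symm.isOpenEmbedding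
  have hψx : ψ (e ⟨x, hxW⟩) = x := by simp [ψ]
  obtain ⟨t, htx, htc, htW⟩ := exists_mem_nhds_isClosed_subset
    ((hWo.inter isOpen_compl_singleton).mem_nhds ⟨hxW, hpx.symm⟩)
  obtain ⟨A, E, hAo, hAt, hEfin, hEtD, hAcl, hAx⟩ :=
    exists_cut_nhds (U := ψ ⁻¹' U) (D := ψ ⁻¹' D) (G := ψ ⁻¹' t)
    (hU.preimage hψ.continuous) (by rwa [mem_preimage, hψx])
    (hD.preimage hψ.isOpenMap) (hψ.continuous.continuousAt.preimage_mem_nhds (hψx ▸ htx))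
  have hBt : closure (ψ '' A) ⊆ t := closure_minimal (image_subset_iff.2 hAt) htc
  have hEt : ψ '' E ⊆ t := image_subset_iff.2 fun z hz => (hEtD hz).1
  refine ⟨ψ '' E, hEfin.image ψ, ?_, fun hp => (htW (hEt hp)).2 rfl, fun S hS hpS hSU => ?_⟩
  · rintro _ ⟨z, hz, rfl⟩
    exact ⟨(hEtD hz).2, W, hWo, (e.symm z).2, M, ‹_›, ‹_›, ‹_›, ⟨e⟩⟩
  -- `S` cannot enter `ψ '' A`, which is relatively clopen in `U \ ψ '' E` and avoids `p`
  have hSA : Disjoint S (ψ '' A) := by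
    refine disjoint_iff_inter_eq_empty.2 (not_nonempty_iff_eq_empty.1 fun hne => ?_)
    refine (htW (hBt (subset_closure (hS.subset_of_closure_inter_subset
      (hψ.isOpenMap _ hAo) hne ?_ hpS)))).2 rfl
    rintro z ⟨hzA, hzS⟩
    obtain ⟨w, rfl⟩ : ∃ w, ψ w = z := ⟨e ⟨z, (htW (hBt hzA)).1⟩, by simp [ψ]⟩
    have hw : w ∈ closure A := by
      rwa [← preimage_image_eq A hψ.injective,
        ← hψ.isOpenMap.preimage_closure_eq_closure_preimage hψ.continuous]
    rcases hAcl ⟨hw, (hSU hzS).1⟩ with hwA | hwE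
    · exact mem_image_of_mem ψ hwA
    · exact absurd (mem_image_of_mem ψ hwE) (hSU hzS).2
  have hUA : ∀ᶠ z in 𝓝 x, z ∈ U → z ∈ ψ '' A := by
    rw [← hψx, ← hψ.map_nhds_eq, Filter.eventually_map]
    exact hAx.mono fun w hw hwU => mem_image_of_mem ψ (hw hwU)
  rw [mem_closure_iff_frequently]
  intro hfreq
  obtain ⟨z, hzS, hzA⟩ := (hfreq.and_eventually hUA).exists
  exact hSA.ne_of_mem hzS (hzA (hSU hzS).1) rfl

theorem IsOpen.closure_interior_closure {C : Set X} (hC : IsOpen C) :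
    closure (interior (closure C)) = closure C :=
  isClosed_closure.closure_interior_subset.antisymm (closure_mono hC.subset_interior_closure)

theorem IsOpen.closure_interior_closure_diff_subset {C : Set X} (hC : IsOpen C) :
    closure (interior (closure C)) \ interior (closure C) ⊆ closure C \ C := by
  rw [hC.closure_interior_closure]
  exact sdiff_subset_sdiff_right hC.subset_interior_closure

theorem IsOpen.orderly_interior_closure {C : Set X} (hCo : IsOpen C) (hC : IsConnected C)
    (hfin : (closure C \ C).Finite) (hLO : closure C \ C ⊆ LO X) :
    Orderly (interior (closure C)) :=
  ⟨isOpen_interior, interior_closure_idem.symm,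
    hC.subset_closure hCo.subset_interior_closure interior_subset,
    hfin.subset hCo.closure_interior_closure_diff_subset,
    hCo.closure_interior_closure_diff_subset.trans hLO⟩

theorem closure_connectedComponentIn_inter_subset [LocallyConnectedSpace X] {O : Set X}
    (hO : IsOpen O) (p : X) :
    closure (connectedComponentIn O p) ∩ O ⊆ connectedComponentIn O p := by
  rintro z ⟨hz, hzO⟩
  obtain ⟨y, hyz, hyp⟩ := mem_closure_iff.1 hz _ hO.connectedComponentIn
    (mem_connectedComponentIn hzO)
  rw [connectedComponentIn_eq hyp, ← connectedComponentIn_eq hyz]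
  exact mem_connectedComponentIn hzO

end Space

theorem stmt_3 {X : Type u} [TopologicalSpace X] (n : ℕ) (L : Fin n → Set X)
    (hclosed : ∀ i, IsClosed (L i)) (hcomp : ∀ i, IsCompact (L i))
    (hconn : ∀ i, IsConnected (L i)) (hlots : ∀ i, IsLOTS ↥(L i))
    (hcover : ⋃ i, L i = Set.univ)
    (p : X) (U : Set X) (hU : Orderly U) (hpU : p ∈ U)
    (D : Set X) (hD : Dense D) :
    ∃ V : Set X, Orderly V ∧ p ∈ V ∧ closure V ⊆ U ∧ closure V \ V ⊆ D := by
  obtain ⟨hUo, -, -, hFfin, hFLO⟩ := hU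
  have : CompactSpace X := ⟨hcover ▸ isCompact_iUnion hcomp⟩
  have : T2Space X := .of_isClosed_cover hclosed (fun i => (hlots i).t2Space) hcover
  have : LocallyConnectedSpace X := .of_isClosed_cover hclosed (fun i =>
    have := isPreconnected_iff_preconnectedSpace.1 (hconn i).isPreconnected
    (hlots i).locallyConnectedSpace) hcover
  choose! E hEfin hED hpE hcut using fun x (hx : x ∈ closure U \ U) =>
    exists_finite_cut_of_mem_LO hUo hD (hFLO hx) hx.2 (ne_of_mem_of_not_mem hpU hx.2)
  set O := U \ ⋃ x ∈ closure U \ U, E x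
  have hO : IsOpen O := hUo.sdiff (hFfin.biUnion hEfin).isClosed
  have hpO : p ∈ O := ⟨hpU, by simpa using fun x hx => hpE x hx⟩
  set C := connectedComponentIn O p
  have hCU : closure C ⊆ U := by
    intro z hz
    by_contra hzU
    have hzF : z ∈ closure U \ U :=
      ⟨closure_mono ((connectedComponentIn_subset _ _).trans sdiff_subset) hz, hzU⟩
    exact hcut z hzF C isPreconnected_connectedComponentIn (mem_connectedComponentIn hpO)
      ((connectedComponentIn_subset _ _).trans
        (sdiff_subset_sdiff_right (subset_biUnion_of_mem (u := E) hzF))) hz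
  have hCE : closure C \ C ⊆ ⋃ x ∈ closure U \ U, E x := fun z ⟨hz, hzC⟩ => by
    by_contra hzE
    exact hzC (closure_connectedComponentIn_inter_subset hO p ⟨hz, hCU hz, hzE⟩)
  have hCo : IsOpen C := hO.connectedComponentIn
  refine ⟨interior (closure C), hCo.orderly_interior_closure
    (isConnected_connectedComponentIn_iff.2 hpO) ((hFfin.biUnion hEfin).subset hCE)
    (hCE.trans (iUnion₂_subset fun x hx => (hED x hx).trans inter_subset_right)),
    hCo.subset_interior_closure (mem_connectedComponentIn hpO), ?_, ?_⟩
  · rw [hCo.closure_interior_closure]; exact hCU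
  · exact hCo.closure_interior_closure_diff_subset.trans
      (hCE.trans (iUnion₂_subset fun x hx => (hED x hx).trans inter_subset_left))
end

section
/- Let L be a compact connected linearly ordered topological space. Then the group Hom_p(L × {0,1}) of self-homeomorphisms of the disjoint union of two copies of L, endowed with the topology of pointwise convergence, is a topological group. -/
open Set Topology

universe u

/-! A homeomorphism `f` of `L × ι` (`ι` discrete) maps each slice `L × {i}` to a slice by a
continuous injection of `L`, which is strictly monotone or antitone because `L` is compact and
connected. So once `f (a, i)` and `f (b, i)` lie in an order-convex neighbourhood, all of
`f ([a, b] × {i})` does: evaluation `Hom_p(L × ι) × (L × ι) → L × ι` is jointly continuous.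
Composition is then continuous outright, and inversion by compactness: if `f₀⁻¹ y ∈ V`, then `f₀`
omits `y` on the compact set `Vᶜ`, and so does every `f` close enough to `f₀`. -/

open Filter Function

theorem mapsTo_Icc_of_mem_ordConnected {α β : Type*} [LinearOrder α] [LinearOrder β] {f : α → β}
    (hf : Monotone f ∨ Antitone f) {a b : α} {S : Set β} [S.OrdConnected]
    (ha : f a ∈ S) (hb : f b ∈ S) : MapsTo f (Icc a b) S := by
  have hmaps : MapsTo f (uIcc a b) (uIcc (f a) (f b)) :=
    hf.elim Monotone.mapsTo_uIcc Antitone.mapsTo_uIcc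
  exact fun x hx => OrdConnected.uIcc_subset ‹_› ha hb (hmaps (Icc_subset_uIcc hx))

theorem exists_Icc_mem_nhds_forall_mapsTo {α β : Type*} [LinearOrder α] [TopologicalSpace α]
    [OrderTopology α] [LinearOrder β] [TopologicalSpace β] [OrderTopology β] {f₀ : α → β}
    (hf₀ : Continuous f₀) {x₀ : α} {V : Set β} (hV : V ∈ 𝓝 (f₀ x₀)) :
    ∃ a b W, Icc a b ∈ 𝓝 x₀ ∧ IsOpen W ∧ f₀ a ∈ W ∧ f₀ b ∈ W ∧
      ∀ f : α → β, Monotone f ∨ Antitone f → f a ∈ W → f b ∈ W → MapsTo f (Icc a b) V := by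
  obtain ⟨c, d, -, hcd, hcdV⟩ := exists_Icc_mem_subset_of_mem_nhds hV
  obtain ⟨a, b, hx₀, hab, habW⟩ := exists_Icc_mem_subset_of_mem_nhds
    (hf₀.continuousAt.preimage_mem_nhds (interior_mem_nhds.2 hcd))
  have hle : a ≤ b := hx₀.1.trans hx₀.2
  refine ⟨a, b, interior (Icc c d), hab, isOpen_interior, habW (left_mem_Icc.2 hle),
    habW (right_mem_Icc.2 hle), fun f hf ha hb => ?_⟩
  exact (mapsTo_Icc_of_mem_ordConnected hf (interior_subset ha) (interior_subset hb)).mono_right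
    hcdV

section CompactLinearOrder

variable {L : Type*} [LinearOrder L] [TopologicalSpace L]

theorem exists_isLUB_of_compactSpace [OrderClosedTopology L] [CompactSpace L] [Nonempty L]
    (s : Set L) : ∃ x, IsLUB s x := by
  obtain ⟨top, -, htop⟩ := isCompact_univ.exists_isLUB (univ_nonempty (α := L))
  have hclosed : IsClosed (upperBounds s) := by
    have : upperBounds s = ⋂ x ∈ s, Ici x := by ext; simp [mem_upperBounds]
    exact this ▸ isClosed_biInter fun x _ => isClosed_Ici
  exact hclosed.isCompact.exists_isLeast ⟨top, fun x _ => htop.1 (mem_univ x)⟩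

theorem Continuous.strictMono_or_strictAnti_of_compactSpace [OrderTopology L] [CompactSpace L]
    [ConnectedSpace L] {δ : Type*} [LinearOrder δ] [TopologicalSpace δ] [OrderClosedTopology δ]
    {f : L → δ} (hf : Continuous f) (hinj : Injective f) : StrictMono f ∨ StrictAnti f := by
  -- compactness makes `L` conditionally complete, as `Continuous.strictMono_of_inj` requires
  choose sup hsup using exists_isLUB_of_compactSpace (L := L)
  have hbdd : ∀ s : Set L, BddAbove s ∧ BddBelow s := fun s =>
    ⟨⟨sup univ, fun x _ => (hsup univ).1 (mem_univ x)⟩,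
      ⟨sup ∅, fun x _ => (hsup ∅).2 (by simp)⟩⟩
  let _ : SupSet L := ⟨sup⟩
  let _ : ConditionallyCompleteLinearOrder L :=
    { conditionallyCompleteLatticeOfLatticeOfsSup L fun s _ _ => hsup s, ‹LinearOrder L› with
      csSup_of_not_bddAbove := fun s hs => absurd (hbdd s).1 hs
      csInf_of_not_bddBelow := fun s hs => absurd (hbdd s).2 hs }
  have := denselyOrdered_of_preconnectedSpace (α := L)
  exact hf.strictMono_of_inj hinj

end CompactLinearOrder

section Slices

variable {L ι : Type*} [TopologicalSpace L] [TopologicalSpace ι] [DiscreteTopology ι]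

theorem snd_apply_mk_eq_of_continuous [PreconnectedSpace L] {Y : Type*} [TopologicalSpace Y]
    {f : L × ι → Y × ι} (hf : Continuous f) (i : ι) (l l' : L) :
    (f (l, i)).2 = (f (l', i)).2 :=
  PreconnectedSpace.constant ‹_› (continuous_snd.comp (hf.comp (Continuous.prodMk_left i)))

theorem injective_fst_apply_mk [PreconnectedSpace L] {Y : Type*} [TopologicalSpace Y]
    {f : L × ι → Y × ι} (hf : Continuous f) (hinj : Injective f) (i : ι) :
    Injective fun l => (f (l, i)).1 := fun l l' h =>
  congrArg Prod.fst (hinj (Prod.ext h (snd_apply_mk_eq_of_continuous hf i l l')))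

theorem Homeomorph.strictMono_or_strictAnti_fst_apply_mk [LinearOrder L] [OrderTopology L]
    [CompactSpace L] [ConnectedSpace L] (f : (L × ι) ≃ₜ (L × ι)) (i : ι) :
    StrictMono (fun l => (f (l, i)).1) ∨ StrictAnti (fun l => (f (l, i)).1) :=
  (continuous_fst.comp (f.continuous.comp (Continuous.prodMk_left i))
    ).strictMono_or_strictAnti_of_compactSpace (injective_fst_apply_mk f.continuous f.injective i)

end Slices

section PointwiseHomeomorph

variable {X : Type*} [TopologicalSpace X]

theorem Homeomorph.continuous_apply_pointwise (x : X) : Continuous fun f : X ≃ₜ X => f x :=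
  (continuous_apply x).comp continuous_induced_dom

theorem Homeomorph.continuous_trans_of_continuous_eval
    (hev : Continuous fun p : (X ≃ₜ X) × X => p.1 p.2) :
    Continuous fun p : (X ≃ₜ X) × (X ≃ₜ X) => p.2.trans p.1 :=
  continuous_induced_rng.2 <| continuous_pi fun x =>
    hev.comp (continuous_fst.prodMk ((continuous_apply_pointwise x).comp continuous_snd))

theorem Homeomorph.continuous_symm_of_continuous_eval [CompactSpace X] [T1Space X]
    (hev : Continuous fun p : (X ≃ₜ X) × X => p.1 p.2) :
    Continuous fun f : X ≃ₜ X => f.symm := by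
  refine continuous_induced_rng.2 <| continuous_pi fun y =>
    continuous_iff_continuousAt.2 fun f₀ => tendsto_nhds.2 fun V hV hf₀V => ?_
  have hmiss : ∀ᶠ f in 𝓝 f₀, ∀ k ∈ Vᶜ, f k ≠ y :=
    hV.isClosed_compl.isCompact.eventually_forall_of_forall_eventually fun k hk => by
      have hne : f₀ k ≠ y := fun h => hk (f₀.symm_apply_eq.2 h.symm ▸ hf₀V)
      exact hev.continuousAt (isOpen_compl_singleton.mem_nhds hne)
  filter_upwards [hmiss] with f hf
  by_contra hfV
  exact hf _ hfV (f.apply_symm_apply y)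

end PointwiseHomeomorph

theorem continuous_eval_homeomorph_prod_discrete {L ι : Type*} [LinearOrder L] [TopologicalSpace L]
    [OrderTopology L] [CompactSpace L] [ConnectedSpace L] [TopologicalSpace ι]
    [DiscreteTopology ι] :
    Continuous fun p : ((L × ι) ≃ₜ (L × ι)) × (L × ι) => p.1 p.2 := by
  refine continuous_iff_continuousAt.2 fun ⟨f₀, l₀, i₀⟩ => tendsto_nhds.2 fun V hV hf₀V => ?_
  set j₀ := (f₀ (l₀, i₀)).2
  have hV' : {m | (m, j₀) ∈ V} ∈ 𝓝 (f₀ (l₀, i₀)).1 :=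
    (hV.preimage (Continuous.prodMk_left j₀)).mem_nhds hf₀V
  obtain ⟨a, b, W, hab, hW, ha, hb, hmaps⟩ := exists_Icc_mem_nhds_forall_mapsTo
    (continuous_fst.comp (f₀.continuous.comp (Continuous.prodMk_left i₀))) hV'
  have hN : {f : (L × ι) ≃ₜ (L × ι) | f (a, i₀) ∈ W ×ˢ {j₀} ∧ f (b, i₀) ∈ W ×ˢ {j₀}} ∈ 𝓝 f₀ := by
    have hWj : IsOpen (W ×ˢ {j₀}) := hW.prod (isOpen_discrete _)
    refine (((hWj.preimage (Homeomorph.continuous_apply_pointwise _)).inter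
      (hWj.preimage (Homeomorph.continuous_apply_pointwise _))).mem_nhds ⟨⟨ha, ?_⟩, ⟨hb, ?_⟩⟩)
    all_goals exact snd_apply_mk_eq_of_continuous f₀.continuous i₀ _ _
  have hslice : Icc a b ×ˢ {i₀} ∈ 𝓝 (l₀, i₀) :=
    prod_mem_nhds hab ((isOpen_discrete {i₀}).mem_nhds rfl)
  refine mem_of_superset (prod_mem_nhds hN hslice) ?_
  rintro ⟨f, l, i⟩ ⟨⟨hfa, hfb⟩, hl, rfl : i = i₀⟩
  have hj : (f (l, i)).2 = j₀ := (snd_apply_mk_eq_of_continuous f.continuous i l a).trans hfa.2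
  have hmono := (f.strictMono_or_strictAnti_fst_apply_mk i).imp StrictMono.monotone
    StrictAnti.antitone
  have hfl := hmaps _ hmono hfa.1 hfb.1 hl
  change f (l, i) ∈ V
  rwa [← Prod.mk.eta (p := f (l, i)), hj]

/-- Hom_p(L × {0,1}) is a topological group for a compact connected LOTS L. -/
theorem stmt_10 {L : Type u} [LinearOrder L] [TopologicalSpace L] [OrderTopology L]
    [CompactSpace L] [ConnectedSpace L] :
    Continuous (fun p : ((L × Bool) ≃ₜ (L × Bool)) × ((L × Bool) ≃ₜ (L × Bool)) =>
        p.2.trans p.1) ∧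
      Continuous (fun f : (L × Bool) ≃ₜ (L × Bool) => f.symm) :=
  ⟨Homeomorph.continuous_trans_of_continuous_eval continuous_eval_homeomorph_prod_discrete,
    Homeomorph.continuous_symm_of_continuous_eval continuous_eval_homeomorph_prod_discrete⟩
end

section
/- Let X be a compact Hausdorff space and let G, R be disjoint compact subsets of a closed subspace L of X that is a compact connected linearly ordered topological space, with G contained in an open set O of X. Then there exists a finite collection J of pairwise disjoint (with disjoint closures) convex open subsets of L such that the union of J is contained in O, contains G ∩ L, misses R ∩ L, and each member of J meets G. -/
open Set Topology

universe u

/-!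
Cover `G ∩ L` by finitely many closed intervals of `L` whose interiors cover it and which stay
inside `O \ R`. Their union `F` has finitely many order-connected components, each of them a
finite union of these intervals and hence closed. The interiors of the components that meet `G`
are convex and open, and their closures lie in distinct components of `F`, so they are disjoint.
-/

section LinearOrder

variable {α : Type*} [LinearOrder α]

theorem disjoint_ordConnectedComponent_of_ne {s : Set α} {x y : α}
    (hxy : ordConnectedComponent s x ≠ ordConnectedComponent s y) :
    Disjoint (ordConnectedComponent s x) (ordConnectedComponent s y) := by
  refine disjoint_left.mpr fun z hzx hzy => hxy ?_
  rw [ordConnectedComponent_eq (mem_ordConnectedComponent.mp hzx),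
    ordConnectedComponent_eq (mem_ordConnectedComponent.mp hzy)]

variable [TopologicalSpace α]

theorem Set.OrdConnected.interior_of_linearOrder [OrderClosedTopology α] {s : Set α}
    (hs : s.OrdConnected) : (interior s).OrdConnected := by
  refine ⟨fun a ha b hb z hz => ?_⟩
  rcases hz.1.eq_or_lt with rfl | haz
  · exact ha
  rcases hz.2.eq_or_lt with rfl | hzb
  · exact hb
  exact interior_maximal (Ioo_subset_Icc_self.trans (hs.out (interior_subset ha)
    (interior_subset hb))) isOpen_Ioo ⟨haz, hzb⟩

theorem isClosed_ordConnectedComponent_biUnion {ι : Type*} (t : Finset ι) {S : ι → Set α}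
    (hScl : ∀ i ∈ t, IsClosed (S i)) (hSoc : ∀ i ∈ t, (S i).OrdConnected) (x : α) :
    IsClosed (ordConnectedComponent (⋃ i ∈ t, S i) x) := by
  set C := ordConnectedComponent (⋃ i ∈ t, S i) x
  have hC : C = ⋃ i ∈ {i | i ∈ t ∧ S i ⊆ C}, S i := by
    refine Subset.antisymm (fun z hzC => ?_) (iUnion₂_subset fun i hi => hi.2)
    obtain ⟨i, hi, hzi⟩ := mem_iUnion₂.mp (ordConnectedComponent_subset hzC)
    have := hSoc i hi
    have hSiC : S i ⊆ C :=
      calc S i ⊆ ordConnectedComponent (⋃ i ∈ t, S i) z :=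
            subset_ordConnectedComponent hzi
              (subset_iUnion₂ (s := fun i (_ : i ∈ t) => S i) i hi)
        _ = C := (ordConnectedComponent_eq (mem_ordConnectedComponent.mp hzC)).symm
    exact mem_iUnion₂.mpr ⟨i, ⟨hi, hSiC⟩, hzi⟩
  rw [hC]
  exact (t.finite_toSet.subset fun i hi => hi.1).isClosed_biUnion fun i hi => hScl i hi.1

theorem IsCompact.exists_finset_ordConnected_isOpen_cover [OrderTopology α] {K U : Set α}
    (hK : IsCompact K) (hU : IsOpen U) (hKU : K ⊆ U) :
    ∃ J : Finset (Set α),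
      (∀ A ∈ J, IsOpen A ∧ A.OrdConnected) ∧
      (∀ A ∈ J, ∀ B ∈ J, A ≠ B → closure A ∩ closure B = ∅) ∧
      (⋃ A ∈ J, A) ⊆ U ∧ K ⊆ (⋃ A ∈ J, A) ∧
      (∀ A ∈ J, (A ∩ K).Nonempty) := by
  classical
  have hIcc : ∀ x ∈ K,
      ∃ S : Set α, S ∈ 𝓝 x ∧ IsClosed S ∧ S.OrdConnected ∧ S ⊆ U := by
    intro x hx
    obtain ⟨b, c, -, hnhds, hsub⟩ := exists_Icc_mem_subset_of_mem_nhds (hU.mem_nhds (hKU hx))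
    exact ⟨Icc b c, hnhds, isClosed_Icc, ordConnected_Icc, hsub⟩
  choose! S hSx hScl hSoc hSU using hIcc
  obtain ⟨t, htK, hKt⟩ := hK.elim_nhds_subcover (fun x => interior (S x))
    fun x hx => interior_mem_nhds.mpr (hSx x hx)
  set F := ⋃ x ∈ t, S x
  have hSC : ∀ x ∈ t, S x ⊆ ordConnectedComponent F x := fun x hx =>
    haveI := hSoc x (htK x hx)
    subset_ordConnectedComponent (mem_of_mem_nhds (hSx x (htK x hx)))
      (subset_iUnion₂ (s := fun x (_ : x ∈ t) => S x) x hx)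
  have hCcl : ∀ x, IsClosed (ordConnectedComponent F x) :=
    isClosed_ordConnectedComponent_biUnion t (fun x hx => hScl x (htK x hx))
      fun x hx => hSoc x (htK x hx)
  refine ⟨t.image fun x => interior (ordConnectedComponent F x), ?_, ?_, ?_, ?_, ?_⟩
  · simp only [Finset.forall_mem_image]
    exact fun x _ => ⟨isOpen_interior, Set.OrdConnected.interior_of_linearOrder inferInstance⟩
  · simp only [Finset.forall_mem_image]
    intro x _ y _ hxy
    refine subset_empty_iff.mp ?_
    calc closure (interior (ordConnectedComponent F x)) ∩
          closure (interior (ordConnectedComponent F y))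
        ⊆ ordConnectedComponent F x ∩ ordConnectedComponent F y :=
          inter_subset_inter (closure_minimal interior_subset (hCcl x))
            (closure_minimal interior_subset (hCcl y))
      _ = ∅ := disjoint_iff_inter_eq_empty.mp
          (disjoint_ordConnectedComponent_of_ne fun h => hxy (by rw [h]))
  · simp only [Finset.set_biUnion_finset_image]
    refine iUnion₂_subset fun x _ => interior_subset.trans ?_
    exact ordConnectedComponent_subset.trans (iUnion₂_subset fun y hy => hSU y (htK y hy))
  · simp only [Finset.set_biUnion_finset_image]
    exact hKt.trans (biUnion_mono subset_rfl fun x hx => interior_mono (hSC x hx))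
  · simp only [Finset.forall_mem_image]
    exact fun x hx => ⟨x, interior_mono (hSC x hx)
      (mem_interior_iff_mem_nhds.mpr (hSx x (htK x hx))), htK x hx⟩

end LinearOrder

theorem stmt_17_general {X : Type u} [TopologicalSpace X] [T2Space X]
    (Lset : Set X) (hLclosed : IsClosed Lset)
    (lo : LinearOrder ↥Lset)
    (hot : @OrderTopology ↥Lset instTopologicalSpaceSubtype lo.toPartialOrder.toPreorder)
    (G R : Set X) (hGcomp : IsCompact G) (hRcomp : IsCompact R)
    (hGR : G ∩ R = ∅)
    (O : Set X) (hOopen : IsOpen O) (hGO : G ⊆ O) :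
    ∃ J : Finset (Set ↥Lset),
      (∀ A ∈ J, @IsOpen ↥Lset instTopologicalSpaceSubtype A ∧
        @Set.OrdConnected ↥Lset lo.toPartialOrder.toPreorder A) ∧
      (∀ A ∈ J, ∀ B ∈ J, A ≠ B → closure A ∩ closure B = ∅) ∧
      (⋃ A ∈ J, (Subtype.val '' A)) ⊆ O ∧
      (Subtype.val ⁻¹' G : Set ↥Lset) ⊆ ⋃ A ∈ J, A ∧
      ((⋃ A ∈ J, (Subtype.val '' A)) ∩ R = ∅) ∧
      (∀ A ∈ J, ((Subtype.val '' A) ∩ G).Nonempty) := by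
  let _ := lo
  have _ := hot
  have hGL : IsCompact (Subtype.val ⁻¹' G : Set ↥Lset) :=
    hLclosed.isClosedEmbedding_subtypeVal.isCompact_preimage hGcomp
  obtain ⟨J, hJ, hJdisj, hJU, hGJ, hJG⟩ := hGL.exists_finset_ordConnected_isOpen_cover
      ((hOopen.sdiff hRcomp.isClosed).preimage continuous_subtype_val)
      fun x hx => ⟨hGO hx, fun hxR => hGR.subset ⟨hx, hxR⟩⟩
  have hJUX : (⋃ A ∈ J, (Subtype.val '' A)) ⊆ O \ R := by
    rw [← image_iUnion₂]
    exact image_subset_iff.mpr hJU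
  refine ⟨J, hJ, hJdisj, hJUX.trans sdiff_subset, hGJ,
    disjoint_iff_inter_eq_empty.mp (subset_sdiff.mp hJUX).2, fun A hA => ?_⟩
  obtain ⟨a, haA, haG⟩ := hJG A hA
  exact ⟨a, mem_image_of_mem _ haA, haG⟩

/-- Claim 2: separation of green and red points in a compact LOTS by finitely many
convex open sets. -/
theorem stmt_17 {X : Type u} [TopologicalSpace X] [CompactSpace X] [T2Space X]
    (Lset : Set X) (hLclosed : IsClosed Lset)
    (lo : LinearOrder ↥Lset)
    (hot : @OrderTopology ↥Lset instTopologicalSpaceSubtype lo.toPartialOrder.toPreorder)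
    (hLcomp : IsCompact Lset) (hLconn : IsConnected Lset)
    (G R : Set X) (hGcomp : IsCompact G) (hRcomp : IsCompact R)
    (hGR : G ∩ R = ∅)
    (O : Set X) (hOopen : IsOpen O) (hGO : G ⊆ O) :
    ∃ J : Finset (Set ↥Lset),
      (∀ A ∈ J, @IsOpen ↥Lset instTopologicalSpaceSubtype A ∧
        @Set.OrdConnected ↥Lset lo.toPartialOrder.toPreorder A) ∧
      (∀ A ∈ J, ∀ B ∈ J, A ≠ B → closure A ∩ closure B = ∅) ∧
      (⋃ A ∈ J, (Subtype.val '' A)) ⊆ O ∧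
      (Subtype.val ⁻¹' G : Set ↥Lset) ⊆ ⋃ A ∈ J, A ∧
      ((⋃ A ∈ J, (Subtype.val '' A)) ∩ R = ∅) ∧
      (∀ A ∈ J, ((Subtype.val '' A) ∩ G).Nonempty) :=
  stmt_17_general Lset hLclosed lo hot G R hGcomp hRcomp hGR O hOopen hGO
end
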